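/- Let Λ ⊆ ℝ^d be separated and suppose the translates Λₙ = Λ − xₙ converge weakly to Γ. Let r > 0 be such that Γ has no points on the boundary sphere ∂B_r(0). Then there exist n₀, k ∈ ℕ such that for every n ≥ n₀ the sets Λₙ ∩ B_r(0) and Γ ∩ B_r(0) each have exactly k elements, and these can be enumerated as μₙ^{(1)},…,μₙ^{(k)} and γ^{(1)},…,γ^{(k)} respectively, with μₙ^{(j)} → γ^{(j)} as n → ∞ for each 1 ≤ j ≤ k. -/

import Mathlib

open MeasureTheory Filter Metric Complex
open scoped ENNReal InnerProductSpace ComplexConjugate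

noncomputable section

abbrev Euc (d : ℕ) := EuclideanSpace ℝ (Fin d)

variable {d : ℕ}

/-- The exponential function `e_λ(t) = e^{2πi λ·t}`. -/
def expFn (l t : Euc d) : ℂ := Complex.exp (((2 * Real.pi * ⟪l, t⟫_ℝ : ℝ) : ℂ) * Complex.I)

lemma expFn_continuous (l : Euc d) : Continuous (expFn l) :=
  Complex.continuous_exp.comp <|
    (Complex.continuous_ofReal.comp (continuous_const.mul (continuous_const.inner continuous_id))).mul
      continuous_const

lemma expFn_norm (l t : Euc d) : ‖expFn l t‖ = 1 := by
  rw [expFn, Complex.norm_exp_ofReal_mul_I]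

lemma expFn_memLp (S : Set (Euc d)) (hS : volume S ≠ ⊤) (l : Euc d) :
    MemLp (expFn l) 2 (volume.restrict S) := by
  haveI : IsFiniteMeasure (volume.restrict S) :=
    ⟨by simpa [Measure.restrict_apply_univ] using lt_top_iff_ne_top.2 hS⟩
  refine MemLp.of_bound ((expFn_continuous l).aestronglyMeasurable) 1 ?_
  filter_upwards with t using le_of_eq (expFn_norm l t)

/-- `e_λ` as an element of `L²(S)`. -/
def expLp (S : Set (Euc d)) (hS : volume S ≠ ⊤) (l : Euc d) :
    Lp ℂ 2 (volume.restrict S) := (expFn_memLp S hS l).toLp _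

/-- Pointwise multiplication by `e_x` (modulation) as a map on `L²(S)`. -/
def modLp (S : Set (Euc d)) (_hS : volume S ≠ ⊤) (x : Euc d)
    (f : Lp ℂ 2 (volume.restrict S)) : Lp ℂ 2 (volume.restrict S) :=
  MemLp.toLp (fun t => expFn x t * f t) <| by
    refine MemLp.of_le (Lp.memLp f)
      (((expFn_continuous x).aestronglyMeasurable).mul (Lp.aestronglyMeasurable f)) ?_
    filter_upwards with t using le_of_eq (by rw [norm_mul, expFn_norm, one_mul])

/-- The translate `Λ - x` of a point set. -/
def setTrans (Λ : Set (Euc d)) (x : Euc d) : Set (Euc d) := (fun l => l - x) '' Λ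

/-- Weak convergence of point sets in Beurling's sense. -/
def WeakLim (Λn : ℕ → Set (Euc d)) (Γ : Set (Euc d)) : Prop :=
  (∀ γ ∈ Γ, ∃ u : ℕ → Euc d, (∀ n, u n ∈ Λn n) ∧ Tendsto u atTop (nhds γ)) ∧
  (∀ φ : ℕ → ℕ, StrictMono φ → ∀ u : ℕ → Euc d, (∀ k, u k ∈ Λn (φ k)) →
    ∀ γ : Euc d, Tendsto u atTop (nhds γ) → γ ∈ Γ)

/-- `Γ` is a weak limit of translates of `Λ`. -/
def InHull (Λ Γ : Set (Euc d)) : Prop :=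
  ∃ x : ℕ → Euc d, WeakLim (fun n => setTrans Λ (x n)) Γ

/-- `Λ` is separated. -/
def IsSeparated (Λ : Set (Euc d)) : Prop :=
  ∃ s > (0:ℝ), ∀ l ∈ Λ, ∀ m ∈ Λ, l ≠ m → s ≤ dist l m

/-- The separation constant `Sep(Λ)`. -/
def sepConst (Λ : Set (Euc d)) : ℝ≥0∞ :=
  ⨅ (l : Λ) (m : Λ) (_ : (l : Euc d) ≠ (m : Euc d)), edist (l : Euc d) (m : Euc d)

/-- Upper Beurling density. -/
def upperDensity (Λ : Set (Euc d)) : ℝ≥0∞ :=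
  Filter.limsup (fun r : ℝ =>
    ⨆ x : Euc d, ((Λ ∩ ball x r).ncard : ℝ≥0∞) / volume (ball (0 : Euc d) r)) atTop

/-- Lower Beurling density. -/
def lowerDensity (Λ : Set (Euc d)) : ℝ≥0∞ :=
  Filter.liminf (fun r : ℝ =>
    ⨅ x : Euc d, ((Λ ∩ ball x r).ncard : ℝ≥0∞) / volume (ball (0 : Euc d) r)) atTop

/-- Frame inequalities for `E(Λ)` in `L²(S)`. -/
def IsFrame (S : Set (Euc d)) (hS : volume S ≠ ⊤) (Λ : Set (Euc d)) (A B : ℝ) : Prop :=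
  ∀ f : Lp ℂ 2 (volume.restrict S),
    A * ‖f‖ ^ 2 ≤ ∑' l : Λ, ‖⟪expLp S hS (l : Euc d), f⟫_ℂ‖ ^ 2 ∧
    ∑' l : Λ, ‖⟪expLp S hS (l : Euc d), f⟫_ℂ‖ ^ 2 ≤ B * ‖f‖ ^ 2

/-- Bessel inequality for `E(Λ)` in `L²(S)`. -/
def IsBessel (S : Set (Euc d)) (hS : volume S ≠ ⊤) (Λ : Set (Euc d)) (B : ℝ) : Prop :=
  ∀ f : Lp ℂ 2 (volume.restrict S),
    ∑' l : Λ, ‖⟪expLp S hS (l : Euc d), f⟫_ℂ‖ ^ 2 ≤ B * ‖f‖ ^ 2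

/-- The frame operator `S_Λ`. -/
def frameOp (S : Set (Euc d)) (hS : volume S ≠ ⊤) (Λ : Set (Euc d))
    (f : Lp ℂ 2 (volume.restrict S)) : Lp ℂ 2 (volume.restrict S) :=
  ∑' l : Λ, ⟪expLp S hS (l : Euc d), f⟫_ℂ • expLp S hS (l : Euc d)

/-- Riesz sequence inequalities for `E(Λ)` in `L²(S)`. -/
def IsRieszSeq (S : Set (Euc d)) (hS : volume S ≠ ⊤) (Λ : Set (Euc d)) (A B : ℝ) : Prop :=
  ∀ c : Λ →₀ ℂ,
    A * ∑ l ∈ c.support, ‖c l‖ ^ 2 ≤ ‖∑ l ∈ c.support, c l • expLp S hS (l : Euc d)‖ ^ 2 ∧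
    ‖∑ l ∈ c.support, c l • expLp S hS (l : Euc d)‖ ^ 2 ≤ B * ∑ l ∈ c.support, ‖c l‖ ^ 2

/-- Closed linear span of `E(Λ)` in `L²(S)`. -/
def spanExp (S : Set (Euc d)) (hS : volume S ≠ ⊤) (Λ : Set (Euc d)) :
    Submodule ℂ (Lp ℂ 2 (volume.restrict S)) :=
  (Submodule.span ℂ (expLp S hS '' Λ)).topologicalClosure

/-- Orthogonal projection onto the closed span of `E(Λ)`. -/
def projExp (S : Set (Euc d)) (hS : volume S ≠ ⊤) (Λ : Set (Euc d))
    (f : Lp ℂ 2 (volume.restrict S)) : Lp ℂ 2 (volume.restrict S) :=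
  haveI : CompleteSpace (spanExp S hS Λ) :=
    (Submodule.isClosed_topologicalClosure _).completeSpace_coe
  ((spanExp S hS Λ).orthogonalProjectionOnto f : Lp ℂ 2 (volume.restrict S))

/-- `E(Λ)` is a Riesz basis for `L²(S)`. -/
def IsRieszBasis (S : Set (Euc d)) (hS : volume S ≠ ⊤) (Λ : Set (Euc d)) : Prop :=
  (∃ A B : ℝ, 0 < A ∧ A ≤ B ∧ IsRieszSeq S hS Λ A B) ∧ spanExp S hS Λ = ⊤


/-!
Since Γ inherits the separation constant of Λ, the set Γ ∩ B_r(0) is finite, say γ¹, …, γᵏ.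
Choose μₙʲ ∈ Λₙ with μₙʲ → γʲ; for large n these are distinct and lie in B_r(0). Conversely, a
further point of Λₙ ∩ B_r(0) along a subsequence would, by compactness, accumulate at a point of Γ
in the closed ball, hence (Γ avoids the sphere) at some γʲ; two sequences with the same limit in
uniformly separated sets eventually coincide, so that point is eventually μₙʲ.
-/

lemma Set.Finite.of_pairwise_le_dist {X : Type*} [MetricSpace X] [ProperSpace X] {S : Set X}
    {s : ℝ} (hs : 0 < s) (hsep : S.Pairwise (s ≤ dist · ·)) (hS : Bornology.IsBounded S) :
    S.Finite := by
  have hcompact : IsCompact S :=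
    isCompact_of_isClosed_isBounded (isClosed_of_pairwise_le_dist hs hsep) hS
  have : DiscreteTopology S :=
    DiscreteTopology.of_forall_le_dist hs fun a b hab => hsep a.2 b.2 (Subtype.coe_ne_coe.2 hab)
  exact hcompact.finite (isDiscrete_iff_discreteTopology.2 this)

lemma Filter.Tendsto.eventually_eq_of_pairwise_le_dist {X ι : Type*} [PseudoMetricSpace X]
    {l : Filter ι} {S : ι → Set X} {s : ℝ} (hs : 0 < s) (hsep : ∀ i, (S i).Pairwise (s ≤ dist · ·))
    {a b : ι → X} (ha : ∀ i, a i ∈ S i) (hb : ∀ i, b i ∈ S i) {z : X}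
    (ha_lim : Tendsto a l (nhds z)) (hb_lim : Tendsto b l (nhds z)) :
    ∀ᶠ i in l, a i = b i := by
  have hdist : Tendsto (fun i => dist (a i) (b i)) l (nhds 0) := by
    simpa using ha_lim.dist hb_lim
  filter_upwards [hdist.eventually (eventually_lt_nhds hs)] with i hi
  by_contra hne
  exact (hsep i (ha i) (hb i) hne).not_gt hi

lemma eventually_injective_of_tendsto {X ι κ : Type*} [TopologicalSpace X] [T2Space X]
    [Finite κ] {l : Filter ι} {u : κ → ι → X} {γ : κ → X} (hγ : Function.Injective γ)
    (hu : ∀ j, Tendsto (u j) l (nhds (γ j))) :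
    ∀ᶠ i in l, Function.Injective (fun j => u j i) := by
  have hne : ∀ j₁ j₂, j₁ ≠ j₂ → ∀ᶠ i in l, u j₁ i ≠ u j₂ i := fun j₁ j₂ hj =>
    ((hu j₁).prodMk_nhds (hu j₂)).eventually
      (isClosed_diagonal.isOpen_compl.mem_nhds (hγ.ne hj))
  filter_upwards [eventually_all.2 fun j₁ => eventually_all.2 fun j₂ =>
    (eventually_imp_distrib_left.2 (hne j₁ j₂))] with i hi j₁ j₂ heq
  by_contra hj
  exact hi j₁ j₂ hj heq

lemma pairwise_le_dist_setTrans {Λ : Set (Euc d)} {s : ℝ} (hsep : Λ.Pairwise (s ≤ dist · ·))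
    (x : Euc d) : (setTrans Λ x).Pairwise (s ≤ dist · ·) := by
  rintro _ ⟨a, ha, rfl⟩ _ ⟨b, hb, rfl⟩ hab
  rw [dist_sub_right]
  exact hsep ha hb fun h => hab (h ▸ rfl)

namespace WeakLim

variable {Λn : ℕ → Set (Euc d)} {Γ : Set (Euc d)} {s : ℝ}

lemma pairwise_le_dist (h : WeakLim Λn Γ) (hsep : ∀ n, (Λn n).Pairwise (s ≤ dist · ·)) :
    Γ.Pairwise (s ≤ dist · ·) := by
  intro a ha b hb hab
  obtain ⟨u, hu, hu_lim⟩ := h.1 a ha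
  obtain ⟨v, hv, hv_lim⟩ := h.1 b hb
  have hdist := hu_lim.dist hv_lim
  refine ge_of_tendsto hdist ?_
  filter_upwards [hdist.eventually (eventually_gt_nhds (dist_pos.2 hab))] with n hn
  exact hsep n (hu n) (hv n) (dist_pos.1 hn)

lemma eventually_subset_range (h : WeakLim Λn Γ) (hs : 0 < s)
    (hsep : ∀ n, (Λn n).Pairwise (s ≤ dist · ·)) {K : Set (Euc d)} (hK : IsCompact K)
    {ι : Type*} {γ : ι → Euc d} (hΓK : Γ ∩ K ⊆ Set.range γ) {u : ι → ℕ → Euc d}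
    (hu : ∀ j n, u j n ∈ Λn n) (hu_lim : ∀ j, Tendsto (u j) atTop (nhds (γ j))) :
    ∀ᶠ n in atTop, Λn n ∩ K ⊆ Set.range (fun j => u j n) := by
  by_contra hfreq
  simp only [not_eventually, Set.not_subset] at hfreq
  obtain ⟨φ, hφ, hφv⟩ := extraction_of_frequently_atTop hfreq
  choose v hvK hv_notMem using hφv
  obtain ⟨w, hwK, ψ, hψ, hw_lim⟩ := hK.tendsto_subseq fun m => (hvK m).2
  have hwΓ : w ∈ Γ := h.2 (φ ∘ ψ) (hφ.comp hψ) (v ∘ ψ) (fun m => (hvK (ψ m)).1) w hw_lim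
  obtain ⟨j, rfl⟩ := hΓK ⟨hwΓ, hwK⟩
  have hcoincide := hw_lim.eventually_eq_of_pairwise_le_dist hs (fun m => hsep (φ (ψ m)))
    (fun m => (hvK (ψ m)).1) (fun m => hu j (φ (ψ m)))
    ((hu_lim j).comp (hφ.comp hψ).tendsto_atTop)
  obtain ⟨m, hm⟩ := hcoincide.exists
  exact hv_notMem (ψ m) ⟨j, hm.symm⟩

end WeakLim

theorem stmt2_general {d : ℕ} (Λ : Set (Euc d)) (hΛ : IsSeparated Λ)
    (x : ℕ → Euc d) (Γ : Set (Euc d))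
    (h : WeakLim (fun n => setTrans Λ (x n)) Γ)
    (r : ℝ) (hbd : ∀ γ ∈ Γ, dist γ (0 : Euc d) ≠ r) :
    ∃ (n₀ k : ℕ) (μ : ℕ → Fin k → Euc d) (γ : Fin k → Euc d),
      Function.Injective γ ∧ Γ ∩ ball (0 : Euc d) r = Set.range γ ∧
      (∀ n ≥ n₀, Function.Injective (μ n) ∧
        setTrans Λ (x n) ∩ ball (0 : Euc d) r = Set.range (μ n)) ∧
      (∀ j : Fin k, Tendsto (fun n => μ n j) atTop (nhds (γ j))) := by
  obtain ⟨s, hs, hsep⟩ := hΛ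
  have hsepn := fun n => pairwise_le_dist_setTrans hsep (x n)
  have hfin : (Γ ∩ ball (0 : Euc d) r).Finite :=
    Set.Finite.of_pairwise_le_dist hs ((h.pairwise_le_dist hsepn).mono Set.inter_subset_left)
      (isBounded_ball.subset Set.inter_subset_right)
  obtain ⟨k, γ, hγ, hγ_range⟩ := hfin.fin_param
  have hγ_mem : ∀ j, γ j ∈ Γ ∩ ball (0 : Euc d) r := fun j => hγ_range ▸ Set.mem_range_self j
  choose u hu hu_lim using fun j => h.1 (γ j) (hγ_mem j).1
  have hΓ_closedBall : Γ ∩ closedBall (0 : Euc d) r ⊆ Set.range γ := fun y ⟨hyΓ, hyr⟩ =>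
    hγ_range ▸ ⟨hyΓ, mem_ball.2 ((mem_closedBall.1 hyr).lt_of_ne (hbd y hyΓ))⟩
  have hball : ∀ᶠ n in atTop, ∀ j, u j n ∈ ball (0 : Euc d) r :=
    eventually_all.2 fun j => (hu_lim j).eventually (isOpen_ball.mem_nhds (hγ_mem j).2)
  have hexhaust := h.eventually_subset_range hs hsepn (isCompact_closedBall 0 r) hΓ_closedBall
    hu hu_lim
  obtain ⟨n₀, hn₀⟩ := eventually_atTop.1 <|
    (eventually_injective_of_tendsto hγ hu_lim).and (hball.and hexhaust)
  refine ⟨n₀, k, fun n j => u j n, γ, hγ, hγ_range.symm, fun n hn => ⟨(hn₀ n hn).1, ?_⟩, hu_lim⟩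
  obtain ⟨-, hn_ball, hn_exhaust⟩ := hn₀ n hn
  refine subset_antisymm (fun y hy => hn_exhaust ⟨hy.1, ball_subset_closedBall hy.2⟩) ?_
  rintro _ ⟨j, rfl⟩
  exact ⟨hu j n, hn_ball j⟩

theorem stmt2 {d : ℕ} (Λ : Set (Euc d)) (hΛ : IsSeparated Λ)
    (x : ℕ → Euc d) (Γ : Set (Euc d))
    (h : WeakLim (fun n => setTrans Λ (x n)) Γ)
    (r : ℝ) (hr : 0 < r) (hbd : ∀ γ ∈ Γ, dist γ (0 : Euc d) ≠ r) :
    ∃ (n₀ k : ℕ) (μ : ℕ → Fin k → Euc d) (γ : Fin k → Euc d),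
      Function.Injective γ ∧ Γ ∩ ball (0 : Euc d) r = Set.range γ ∧
      (∀ n ≥ n₀, Function.Injective (μ n) ∧
        setTrans Λ (x n) ∩ ball (0 : Euc d) r = Set.range (μ n)) ∧
      (∀ j : Fin k, Tendsto (fun n => μ n j) atTop (nhds (γ j))) :=
  stmt2_general Λ hΛ x Γ h r hbd

end
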